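/- Let p ≥ 2, T > 0, A : [0,T] × T^2 → R^2, G : [0,T] × T^2 → C, φ : [0,T] × T^2 → C smooth with (∂_t − D_A^j D_{A,j}) φ = G, and K a smooth solution of (∂_t + Δ)K = 0. Then ∂_t(K |φ|^p / p) = −(ΔK)|φ|^p/p + K Δ(|φ|^p/p) − K( ((p−2)/4) | |φ|^{(p−4)/2} ∇(|φ|^2) |^2 + |φ|^{p−2} |D_A φ|^2 − |φ|^{p−2} Re(conj(φ) G) ), at points where φ ≠ 0. -/

import Mathlib

/-!
The connection drops out of the evolution of `u = |φ|²`: since `Re(φ̄ · i a ψ) = -Re(ψ̄ · i a φ)`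
for real `a`, expanding `D_{A,j} D_{A,j} φ` gives `2 Re(φ̄ D_A^j D_{A,j} φ) = Δu - 2 |D_A φ|²`,
so the equation for `φ` yields `∂_t u = Δu - 2 |D_A φ|² + 2 Re(φ̄ G)`. Where `φ ≠ 0` the function
`|φ|^p / p = u^{p/2} / p` is smooth, and the chain rule for `u^{p/2}` together with the product
rule and `∂_t K = -ΔK` turns this into the stated formula.
-/

noncomputable section

variable {F : Type*} [NormedAddCommGroup F] [NormedSpace ℝ F]

/-- Spatial partial derivative `∂_j` on space-time `ℝ × ℝ²`. -/
def pd (j : Fin 2) (f : ℝ × EuclideanSpace ℝ (Fin 2) → F) :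
    ℝ × EuclideanSpace ℝ (Fin 2) → F :=
  fun z => fderiv ℝ f z (0, EuclideanSpace.single j 1)

/-- Time derivative `∂_t` on space-time. -/
def td (f : ℝ × EuclideanSpace ℝ (Fin 2) → F) :
    ℝ × EuclideanSpace ℝ (Fin 2) → F :=
  fun z => fderiv ℝ f z (1, 0)

/-- Spatial Laplacian `Δ = Σ_j ∂_j ∂_j` on space-time. -/
def lap2 (f : ℝ × EuclideanSpace ℝ (Fin 2) → F) :
    ℝ × EuclideanSpace ℝ (Fin 2) → F :=
  fun z => ∑ j : Fin 2, pd j (pd j f) z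

/-- Spatial covariant derivative `D_{A,j} f = ∂_j f + i A_j f` on space-time. -/
def cD (A : ℝ × EuclideanSpace ℝ (Fin 2) → Fin 2 → ℝ) (j : Fin 2)
    (f : ℝ × EuclideanSpace ℝ (Fin 2) → ℂ) : ℝ × EuclideanSpace ℝ (Fin 2) → ℂ :=
  fun z => pd j f z + Complex.I * (A z j : ℂ) * f z

/-- Covariant Laplacian `D_A^j D_{A,j}` on space-time. -/
def cLap2 (A : ℝ × EuclideanSpace ℝ (Fin 2) → Fin 2 → ℝ)
    (f : ℝ × EuclideanSpace ℝ (Fin 2) → ℂ) : ℝ × EuclideanSpace ℝ (Fin 2) → ℂ :=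
  fun z => ∑ j : Fin 2, cD A j (cD A j f) z

open ComplexConjugate
open scoped InnerProductSpace

theorem Real.sq_rpow_div_two {x : ℝ} (hx : 0 ≤ x) (q : ℝ) : (x ^ 2) ^ (q / 2) = x ^ q := by
  rw [Real.rpow_div_two_eq_sqrt q (sq_nonneg x), Real.sqrt_sq hx]

section Calculus

variable {E : Type*} [NormedAddCommGroup E] [NormedSpace ℝ E]

theorem ContDiff.differentiable_fderiv_apply {f : E → F} (hf : ContDiff ℝ 2 f) (v : E) :
    Differentiable ℝ (fun w => fderiv ℝ f w v) :=
  ((hf.fderiv_right (m := 1) le_rfl).clm_apply contDiff_const).differentiable one_ne_zero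

theorem fderiv_div_const_field_apply {g : E → ℝ} (c : ℝ) (w v : E) :
    fderiv ℝ (fun w => g w / c) w v = fderiv ℝ g w v / c := by
  have h := fderiv_const_smul_field (𝕜 := ℝ) (f := g) c⁻¹
  simp only [div_eq_inv_mul]
  exact congrArg (fun L => L w v) h

theorem DifferentiableAt.fderiv_norm_sq_apply {f : E → ℂ} {z : E} (hf : DifferentiableAt ℝ f z)
    (v : E) :
    fderiv ℝ (fun w => ‖f w‖ ^ 2) z v = 2 * (conj (f z) * fderiv ℝ f z v).re := by
  simp only [hf.hasFDerivAt.norm_sq.fderiv, smul_apply, ContinuousLinearMap.comp_apply,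
    coe_innerSL_apply, Complex.inner, nsmul_eq_mul, Nat.cast_ofNat, mul_comm (fderiv ℝ f z v)]

theorem Differentiable.fderiv_fderiv_norm_sq_apply {f : E → ℂ} {z : E} (hf : Differentiable ℝ f)
    (v : E) (hf' : DifferentiableAt ℝ (fun w => fderiv ℝ f w v) z) :
    fderiv ℝ (fun w => fderiv ℝ (fun w => ‖f w‖ ^ 2) w v) z v
      = 2 * ‖fderiv ℝ f z v‖ ^ 2
        + 2 * (conj (f z) * fderiv ℝ (fun w => fderiv ℝ f w v) z v).re := by
  have hfirst : (fun w => fderiv ℝ (fun w => ‖f w‖ ^ 2) w v)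
      = fun w => 2 * ⟪f w, fderiv ℝ f w v⟫_ℝ := by
    funext w
    rw [(hf w).fderiv_norm_sq_apply, Complex.inner, mul_comm (fderiv ℝ f w v)]
  rw [hfirst, fderiv_const_mul ((hf z).inner ℝ hf'), smul_apply, smul_eq_mul,
    fderiv_inner_apply ℝ (hf z) hf']
  simp only [Complex.inner, Complex.sq_norm, Complex.normSq_apply, Complex.mul_re,
    Complex.conj_re, Complex.conj_im]
  ring

theorem DifferentiableAt.fderiv_rpow_const_apply {u : E → ℝ} {z : E} (q : ℝ)
    (hu : DifferentiableAt ℝ u z) (hz : u z ≠ 0) (v : E) :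
    fderiv ℝ (fun w => u w ^ q) z v = q * u z ^ (q - 1) * fderiv ℝ u z v := by
  rw [(hu.hasFDerivAt.rpow_const (Or.inl hz)).fderiv]
  rfl

theorem Differentiable.fderiv_fderiv_rpow_const_apply {u : E → ℝ} {z : E} (q : ℝ)
    (hu : Differentiable ℝ u) (v : E) (hu' : DifferentiableAt ℝ (fun w => fderiv ℝ u w v) z)
    (hz : u z ≠ 0) :
    fderiv ℝ (fun w => fderiv ℝ (fun w => u w ^ q) w v) z v
      = q * u z ^ (q - 1) * fderiv ℝ (fun w => fderiv ℝ u w v) z v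
        + q * (q - 1) * u z ^ (q - 2) * fderiv ℝ u z v ^ 2 := by
  have hfirst : (fun w => fderiv ℝ (fun w => u w ^ q) w v)
      =ᶠ[nhds z] fun w => q * u w ^ (q - 1) * fderiv ℝ u w v := by
    filter_upwards [(hu z).continuousAt.eventually_ne hz] with w hw
    exact (hu w).fderiv_rpow_const_apply q hw v
  have hder := (((hu z).hasFDerivAt.rpow_const (p := q - 1) (Or.inl hz)).const_mul q).fun_mul
    hu'.hasFDerivAt
  rw [hfirst.fderiv_eq, hder.fderiv]
  simp only [add_apply, smul_apply, smul_eq_mul]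
  rw [show q - 1 - 1 = q - 2 by ring]
  ring

theorem fderiv_mul_norm_rpow_div_apply {K : E → ℝ} {φ : E → ℂ} {z : E}
    {p : ℝ} (hp : p ≠ 0) (hK : DifferentiableAt ℝ K z) (hφ : DifferentiableAt ℝ φ z)
    (hφz : φ z ≠ 0) (v : E) :
    fderiv ℝ (fun w => K w * ‖φ w‖ ^ p / p) z v
      = fderiv ℝ K z v * (‖φ z‖ ^ p / p)
        + K z * (‖φ z‖ ^ (p - 2) / 2 * fderiv ℝ (fun w => ‖φ w‖ ^ 2) z v) := by
  have hu : DifferentiableAt ℝ (fun w => ‖φ w‖ ^ 2) z := hφ.norm_sq ℝ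
  have hu0 : ‖φ z‖ ^ 2 ≠ 0 := by positivity
  have hfun : (fun w => K w * ‖φ w‖ ^ p) = fun w => K w * (‖φ w‖ ^ 2) ^ (p / 2) := by
    funext w
    rw [Real.sq_rpow_div_two (norm_nonneg _)]
  rw [fderiv_div_const_field_apply, hfun,
    fderiv_fun_mul hK ((hu.hasFDerivAt.rpow_const (Or.inl hu0)).differentiableAt),
    add_apply, smul_apply, smul_apply, smul_eq_mul, smul_eq_mul,
    hu.fderiv_rpow_const_apply _ hu0, Real.sq_rpow_div_two (norm_nonneg _),
    show p / 2 - 1 = (p - 2) / 2 by ring, Real.sq_rpow_div_two (norm_nonneg _)]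
  field_simp
  ring

theorem fderiv_fderiv_norm_rpow_div_apply {φ : E → ℂ} {z : E} {p : ℝ}
    (hp : p ≠ 0) (hφ : ContDiff ℝ 2 φ) (hφz : φ z ≠ 0) (v : E) :
    fderiv ℝ (fun w => fderiv ℝ (fun w => ‖φ w‖ ^ p / p) w v) z v
      = ‖φ z‖ ^ (p - 2) / 2 * fderiv ℝ (fun w => fderiv ℝ (fun w => ‖φ w‖ ^ 2) w v) z v
        + (p - 2) / 4 * ‖φ z‖ ^ (p - 4) * fderiv ℝ (fun w => ‖φ w‖ ^ 2) z v ^ 2 := by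
  have hu : ContDiff ℝ 2 (fun w => ‖φ w‖ ^ 2) := hφ.norm_sq ℝ
  have hu0 : ‖φ z‖ ^ 2 ≠ 0 := by positivity
  have hfun : (fun w => ‖φ w‖ ^ p / p) = fun w => (‖φ w‖ ^ 2) ^ (p / 2) / p := by
    funext w
    rw [Real.sq_rpow_div_two (norm_nonneg _)]
  simp only [hfun, fderiv_div_const_field_apply]
  rw [(hu.differentiable two_ne_zero).fderiv_fderiv_rpow_const_apply
    _ _ (hu.differentiable_fderiv_apply v z) hu0, show p / 2 - 1 = (p - 2) / 2 by ring,
    show p / 2 - 2 = (p - 4) / 2 by ring, Real.sq_rpow_div_two (norm_nonneg _),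
    Real.sq_rpow_div_two (norm_nonneg _)]
  field_simp
  ring

end Calculus

open Complex in
/-- Pointwise form of `2 Re(φ̄ D_j D_j φ) = ∂_j ∂_j |φ|² - 2 |D_j φ|²`, with `P₁ = ∂_j φ`,
`P₂ = ∂_j ∂_j φ`, `α = A_j`, `β = ∂_j A_j`. -/
theorem re_conj_mul_covariant_add_norm_sq (b P₁ P₂ : ℂ) (α β : ℝ) :
    (conj b * (P₂ + I * β * b + I * α * P₁ + I * α * (P₁ + I * α * b))).re
        + ‖P₁ + I * α * b‖ ^ 2
      = (conj b * P₂).re + ‖P₁‖ ^ 2 := by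
  simp only [Complex.sq_norm, normSq_apply, add_re, add_im, mul_re, mul_im, I_re, I_im, ofReal_re,
    ofReal_im, conj_re, conj_im]
  ring

section SpaceTime

variable {A : ℝ × EuclideanSpace ℝ (Fin 2) → Fin 2 → ℝ} {φ : ℝ × EuclideanSpace ℝ (Fin 2) → ℂ}
  {z : ℝ × EuclideanSpace ℝ (Fin 2)}

theorem pd_cD (j : Fin 2) (hφ : ContDiff ℝ 2 φ) (hA : DifferentiableAt ℝ (fun w => A w j) z) :
    pd j (cD A j φ) z
      = pd j (pd j φ) z + Complex.I * ((pd j (fun w => A w j) z : ℝ) : ℂ) * φ z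
        + Complex.I * (A z j : ℂ) * pd j φ z := by
  have hφd : DifferentiableAt ℝ φ z := hφ.differentiable two_ne_zero z
  have hAC : DifferentiableAt ℝ (fun w => (A w j : ℂ)) z :=
    Complex.ofRealCLM.differentiableAt.comp z hA
  have hAφ : DifferentiableAt ℝ (fun w => Complex.I * (A w j : ℂ) * φ w) z :=
    (hAC.const_mul _).mul hφd
  have hderA : fderiv ℝ (fun w => (A w j : ℂ)) z
      = Complex.ofRealCLM.comp (fderiv ℝ (fun w => A w j) z) :=
    (Complex.ofRealCLM.hasFDerivAt.comp z hA.hasFDerivAt).fderiv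
  unfold cD pd
  rw [fderiv_fun_add (hφ.differentiable_fderiv_apply _ z) hAφ, add_apply,
    fderiv_fun_mul (hAC.const_mul _) hφd, fderiv_const_mul hAC, hderA]
  simp only [add_apply, smul_apply, smul_eq_mul, ContinuousLinearMap.comp_apply,
    Complex.ofRealCLM_apply]
  ring

theorem two_re_conj_mul_cD_cD (j : Fin 2) (hφ : ContDiff ℝ 2 φ)
    (hA : DifferentiableAt ℝ (fun w => A w j) z) :
    2 * (conj (φ z) * cD A j (cD A j φ) z).re
      = pd j (pd j (fun w => ‖φ w‖ ^ 2)) z - 2 * ‖cD A j φ z‖ ^ 2 := by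
  have hsecond : pd j (pd j (fun w => ‖φ w‖ ^ 2)) z
      = 2 * ‖pd j φ z‖ ^ 2 + 2 * (conj (φ z) * pd j (pd j φ) z).re :=
    (hφ.differentiable two_ne_zero).fderiv_fderiv_norm_sq_apply _
      (hφ.differentiable_fderiv_apply _ z)
  have hcancel := re_conj_mul_covariant_add_norm_sq (φ z) (pd j φ z) (pd j (pd j φ) z) (A z j)
    (pd j (fun w => A w j) z)
  have hcD : cD A j φ z = pd j φ z + Complex.I * (A z j : ℂ) * φ z := rfl
  have hcDcD : cD A j (cD A j φ) z = pd j (cD A j φ) z + Complex.I * (A z j : ℂ) * cD A j φ z :=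
    rfl
  rw [hcDcD, pd_cD j hφ hA, hcD, hsecond]
  linarith

theorem td_norm_sq_eq_of_heat {g : ℂ} (hφ : ContDiff ℝ 2 φ) (hA : DifferentiableAt ℝ A z)
    (hheat : td φ z = cLap2 A φ z + g) :
    td (fun w => ‖φ w‖ ^ 2) z
      = lap2 (fun w => ‖φ w‖ ^ 2) z - 2 * ∑ j, ‖cD A j φ z‖ ^ 2 + 2 * (conj (φ z) * g).re := by
  have hfirst : td (fun w => ‖φ w‖ ^ 2) z = 2 * (conj (φ z) * td φ z).re :=
    (hφ.differentiable two_ne_zero z).fderiv_norm_sq_apply _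
  have hgauge j := two_re_conj_mul_cD_cD j hφ (differentiableAt_pi.1 hA j)
  rw [hfirst, hheat, cLap2, lap2]
  simp only [Fin.sum_univ_two, mul_add, Complex.add_re] at hgauge ⊢
  linarith [hgauge 0, hgauge 1]

theorem lap2_norm_rpow_div {p : ℝ} (hp : p ≠ 0) (hφ : ContDiff ℝ 2 φ) (hφz : φ z ≠ 0) :
    lap2 (fun w => ‖φ w‖ ^ p / p) z
      = ‖φ z‖ ^ (p - 2) / 2 * lap2 (fun w => ‖φ w‖ ^ 2) z
        + (p - 2) / 4 * ‖φ z‖ ^ (p - 4) * ∑ j, pd j (fun w => ‖φ w‖ ^ 2) z ^ 2 := by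
  simp only [lap2, Finset.mul_sum, ← Finset.sum_add_distrib]
  exact Finset.sum_congr rfl fun j _ => fderiv_fderiv_norm_rpow_div_apply hp hφ hφz _

end SpaceTime

theorem covariant_monotonicity_formula_power_general
    (p : ℝ) (hp : 2 ≤ p)
    (T : ℝ)
    (A : ℝ × EuclideanSpace ℝ (Fin 2) → Fin 2 → ℝ)
    (φ G : ℝ × EuclideanSpace ℝ (Fin 2) → ℂ)
    (K : ℝ × EuclideanSpace ℝ (Fin 2) → ℝ)
    (hA : ContDiff ℝ (⊤ : ℕ∞) A) (hφ : ContDiff ℝ (⊤ : ℕ∞) φ)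
    (hK : ContDiff ℝ (⊤ : ℕ∞) K)
    (hheat : ∀ z : ℝ × EuclideanSpace ℝ (Fin 2), z.1 ∈ Set.Icc 0 T →
      td φ z = cLap2 A φ z + G z)
    (hbackK : ∀ z : ℝ × EuclideanSpace ℝ (Fin 2), z.1 ∈ Set.Icc 0 T →
      td K z + lap2 K z = 0)
    (z : ℝ × EuclideanSpace ℝ (Fin 2)) (hz : z.1 ∈ Set.Icc 0 T) (hφz : φ z ≠ 0) :
    td (fun w => K w * ‖φ w‖ ^ p / p) z
      = -(lap2 K z) * (‖φ z‖ ^ p / p) + K z * lap2 (fun w => ‖φ w‖ ^ p / p) z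
        - K z * ((p - 2) / 4 *
              (∑ j : Fin 2, (‖φ z‖ ^ ((p - 4) / 2) * pd j (fun w => ‖φ w‖ ^ 2) z) ^ 2)
            + ‖φ z‖ ^ (p - 2) * (∑ j : Fin 2, ‖cD A j φ z‖ ^ 2)
            - ‖φ z‖ ^ (p - 2) * ((starRingEnd ℂ) (φ z) * G z).re) := by
  have hp0 : p ≠ 0 := by linarith
  have hφ2 : ContDiff ℝ 2 φ := hφ.of_le (WithTop.coe_le_coe.2 le_top)
  have htd : td (fun w => K w * ‖φ w‖ ^ p / p) z
      = td K z * (‖φ z‖ ^ p / p) + K z * (‖φ z‖ ^ (p - 2) / 2 * td (fun w => ‖φ w‖ ^ 2) z) :=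
    fderiv_mul_norm_rpow_div_apply hp0 (hK.differentiable (by simp) z)
      (hφ2.differentiable two_ne_zero z) hφz _
  have hKt : td K z = -lap2 K z := by linarith [hbackK z hz]
  have hsq : (‖φ z‖ ^ ((p - 4) / 2)) ^ 2 = ‖φ z‖ ^ (p - 4) := by
    rw [← Real.rpow_mul_natCast (norm_nonneg _)]
    norm_num
  rw [htd, hKt, td_norm_sq_eq_of_heat hφ2 (hA.differentiable (by simp) z) (hheat z hz),
    lap2_norm_rpow_div hp0 hφ2 hφz]
  simp only [mul_pow, hsq, ← Finset.mul_sum]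
  ring

/-- **Covariant monotonicity formula (`p`-th power case).** For `p ≥ 2`, if
`(∂_t − D_A^j D_{A,j}) φ = G` on `[0,T] × T²` and `(∂_t + Δ)K = 0`, then at points where
`φ ≠ 0`:
`∂_t(K|φ|^p/p) = −(ΔK)|φ|^p/p + K Δ(|φ|^p/p)
  − K( ((p−2)/4) ||φ|^{(p−4)/2} ∇(|φ|²)|² + |φ|^{p−2}|D_A φ|² − |φ|^{p−2} Re(conj φ · G))`. -/
theorem covariant_monotonicity_formula_power
    (p : ℝ) (hp : 2 ≤ p)
    (T : ℝ) (hT : 0 < T)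
    (A : ℝ × EuclideanSpace ℝ (Fin 2) → Fin 2 → ℝ)
    (φ G : ℝ × EuclideanSpace ℝ (Fin 2) → ℂ)
    (K : ℝ × EuclideanSpace ℝ (Fin 2) → ℝ)
    (hA : ContDiff ℝ (⊤ : ℕ∞) A) (hφ : ContDiff ℝ (⊤ : ℕ∞) φ)
    (hG : ContDiff ℝ (⊤ : ℕ∞) G) (hK : ContDiff ℝ (⊤ : ℕ∞) K)
    (hAper : ∀ (z : ℝ × EuclideanSpace ℝ (Fin 2)) (j k : Fin 2),
      A (z.1, z.2 + EuclideanSpace.single k (2 * Real.pi)) j = A z j)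
    (hφper : ∀ (z : ℝ × EuclideanSpace ℝ (Fin 2)) (k : Fin 2),
      φ (z.1, z.2 + EuclideanSpace.single k (2 * Real.pi)) = φ z)
    (hGper : ∀ (z : ℝ × EuclideanSpace ℝ (Fin 2)) (k : Fin 2),
      G (z.1, z.2 + EuclideanSpace.single k (2 * Real.pi)) = G z)
    (hKper : ∀ (z : ℝ × EuclideanSpace ℝ (Fin 2)) (k : Fin 2),
      K (z.1, z.2 + EuclideanSpace.single k (2 * Real.pi)) = K z)
    (hheat : ∀ z : ℝ × EuclideanSpace ℝ (Fin 2), z.1 ∈ Set.Icc 0 T →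
      td φ z = cLap2 A φ z + G z)
    (hbackK : ∀ z : ℝ × EuclideanSpace ℝ (Fin 2), z.1 ∈ Set.Icc 0 T →
      td K z + lap2 K z = 0)
    (z : ℝ × EuclideanSpace ℝ (Fin 2)) (hz : z.1 ∈ Set.Icc 0 T) (hφz : φ z ≠ 0) :
    td (fun w => K w * ‖φ w‖ ^ p / p) z
      = -(lap2 K z) * (‖φ z‖ ^ p / p) + K z * lap2 (fun w => ‖φ w‖ ^ p / p) z
        - K z * ((p - 2) / 4 *
              (∑ j : Fin 2, (‖φ z‖ ^ ((p - 4) / 2) * pd j (fun w => ‖φ w‖ ^ 2) z) ^ 2)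
            + ‖φ z‖ ^ (p - 2) * (∑ j : Fin 2, ‖cD A j φ z‖ ^ 2)
            - ‖φ z‖ ^ (p - 2) * ((starRingEnd ℂ) (φ z) * G z).re) :=
  covariant_monotonicity_formula_power_general p hp T A φ G K hA hφ hK hheat hbackK z hz hφz
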